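/- arXiv:math/0511652 — 3 statements merged into one kernel-verified Lean document; each statement's English description precedes it below -/
import Mathlib

section
/- Let 0 < p < 1, q = 1 - p, and let r ≥ 1. For n ≥ 0 define z_n as the probability that in n independent Bernoulli trials, each with success probability p, there is no run of r consecutive successes; equivalently, z_n = Σ_{s} p^{(number of successes in s)} · q^{(number of failures in s)}, where the sum ranges over all sequences s ∈ {success, failure}^n containing no r consecutive successes. Define β_{n,r} = Σ_{l=0}^{⌊n/(r+1)⌋} (−1)^l · C(n − l·r, l) · (q·p^r)^l, where ⌊·⌋ is the floor and C(·,·) is the binomial coefficient. Then for all n ≥ r, z_n = β_{n,r} − p^r · β_{n−r,r}. -/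
/-- `hasRun r s` means the Boolean sequence `s` of length `n` contains a run of
`r` consecutive `true`s (successes). -/
def hasRun (r : ℕ) {n : ℕ} (s : Fin n → Bool) : Prop :=
  ∃ i : ℕ, i + r ≤ n ∧ ∀ j < r, ∀ h : i + j < n, s ⟨i + j, h⟩ = true

open Classical in
/-- The probability that `n` independent Bernoulli(p) trials contain no run of
`r` consecutive successes: the sum over all success/failure sequences without a
run of `r` successes of `p^(#successes) * (1-p)^(#failures)`. -/
noncomputable def noRunProb (p : ℝ) (r n : ℕ) : ℝ :=
  ∑ s ∈ Finset.univ.filter (fun s : Fin n → Bool => ¬ hasRun r s),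
    p ^ (Finset.univ.filter (fun i : Fin n => s i = true)).card *
      (1 - p) ^ (Finset.univ.filter (fun i : Fin n => s i = false)).card

/-- `betaCoeff a r n = Σ_{l=0}^{⌊n/(r+1)⌋} (-1)^l C(n - l·r, l) a^l`. -/
noncomputable def betaCoeff (a : ℝ) (r n : ℕ) : ℝ :=
  ∑ l ∈ Finset.range (n / (r + 1) + 1),
    (-1 : ℝ) ^ l * (Nat.choose (n - l * r) l : ℝ) * a ^ l

/-! ### Auxiliary definitions and lemmas -/

def wgt (p : ℝ) {n : ℕ} (s : Fin n → Bool) : ℝ := ∏ i, (if s i then p else 1-p)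

open Classical in
noncomputable def Zf (p : ℝ) (r n : ℕ) : ℝ :=
  ∑ s : Fin n → Bool, if hasRun r s then 0 else wgt p s

lemma fcongr {n : ℕ} (s : Fin n → Bool) {a b : ℕ} (h : a < n) (h' : b < n) (hab : a = b) :
    s ⟨a, h⟩ = s ⟨b, h'⟩ := by subst hab; rfl

lemma cons_mk_pos {n : ℕ} (b : Bool) (s : Fin n → Bool) (j : ℕ) (h : j < n + 1) (hj : 0 < j) :
    Fin.cons (α := fun _ => Bool) b s ⟨j, h⟩ = s ⟨j - 1, by omega⟩ := by
  have he : (⟨j, h⟩ : Fin (n+1)) = Fin.succ ⟨j - 1, by omega⟩ := by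
    simp [Fin.ext_iff]; omega
  rw [he, Fin.cons_succ]

lemma cons_mk_zero {n : ℕ} (b : Bool) (s : Fin n → Bool) (h : 0 < n + 1) :
    Fin.cons (α := fun _ => Bool) b s ⟨0, h⟩ = b := by
  have he : (⟨0, h⟩ : Fin (n+1)) = 0 := rfl
  rw [he, Fin.cons_zero]

lemma append_mk_left {m n : ℕ} (x : Fin m → Bool) (y : Fin n → Bool) (j : ℕ)
    (h : j < m + n) (hj : j < m) : Fin.append x y ⟨j, h⟩ = x ⟨j, hj⟩ := by
  have he : (⟨j, h⟩ : Fin (m+n)) = Fin.castAdd n ⟨j, hj⟩ := by simp [Fin.ext_iff]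
  rw [he, Fin.append_left]

lemma append_mk_right {m n : ℕ} (x : Fin m → Bool) (y : Fin n → Bool) (j : ℕ)
    (h : j < m + n) (hj : m ≤ j) : Fin.append x y ⟨j, h⟩ = y ⟨j - m, by omega⟩ := by
  have he : (⟨j, h⟩ : Fin (m+n)) = Fin.natAdd m ⟨j - m, by omega⟩ := by
    simp [Fin.ext_iff]; omega
  rw [he, Fin.append_right]

lemma hasRun_cons {r n : ℕ} {s : Fin n → Bool} (b : Bool) (h : hasRun r s) :
    hasRun r (Fin.cons b s) := by
  obtain ⟨i, hi, hrun⟩ := h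
  refine ⟨i + 1, by omega, fun j hj hlt => ?_⟩
  rw [cons_mk_pos _ _ _ _ (by omega)]
  have h2 : i + j < n := by omega
  have := hrun j hj h2
  rw [fcongr s _ h2 (by omega)]
  exact this

lemma sum_append {m n : ℕ} (F : (Fin (m+n) → Bool) → ℝ) :
    ∑ t : Fin (m+n) → Bool, F t
      = ∑ u : Fin m → Bool, ∑ v : Fin n → Bool, F (Fin.append u v) := by
  rw [← Fintype.sum_equiv (Fin.appendEquiv m n)
      (fun uv : (Fin m → Bool) × (Fin n → Bool) => F (Fin.append uv.1 uv.2)) F (fun uv => rfl)]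
  exact Fintype.sum_prod_type _

lemma sum_cons {n : ℕ} (F : (Fin (n+1) → Bool) → ℝ) :
    ∑ t : Fin (n+1) → Bool, F t = ∑ b : Bool, ∑ s : Fin n → Bool, F (Fin.cons b s) := by
  rw [← Fintype.sum_equiv (Fin.consEquiv (fun _ : Fin (n+1) => Bool))
      (fun bs : Bool × (Fin n → Bool) => F (Fin.cons bs.1 bs.2)) F (fun bs => rfl)]
  exact Fintype.sum_prod_type _

lemma wgt_cons (p : ℝ) {n : ℕ} (b : Bool) (s : Fin n → Bool) :
    wgt p (Fin.cons b s) = (if b then p else 1-p) * wgt p s := by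
  unfold wgt
  rw [Fin.prod_univ_succ]
  simp

lemma wgt_append (p : ℝ) {m n : ℕ} (u : Fin m → Bool) (v : Fin n → Bool) :
    wgt p (Fin.append u v) = wgt p u * wgt p v := by
  unfold wgt
  rw [Fin.prod_univ_add]
  simp [Fin.append_left, Fin.append_right]

lemma sum_wgt (p : ℝ) : ∀ n : ℕ, ∑ s : Fin n → Bool, wgt p s = 1 := by
  intro n
  induction n with
  | zero => simp [wgt]
  | succ n ih =>
      rw [sum_cons (fun t => wgt p t)]
      simp only [wgt_cons]
      simp only [← Finset.mul_sum, ih, Fintype.sum_bool, mul_one, if_true, if_false,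
        Bool.false_eq_true, ite_true, ite_false]
      ring

lemma key_iff {k m : ℕ} (b : Bool) (x : Fin (k+1) → Bool) (y : Fin m → Bool) :
    (hasRun (k+1) (Fin.cons b (Fin.append x y)) ∧ ¬ hasRun (k+1) (Fin.append x y))
    ↔ (b = true ∧ x = (fun i => decide (i.val < k)) ∧ ¬ hasRun (k+1) y) := by
  constructor
  · rintro ⟨⟨i, hi, hrun⟩, h2⟩
    have hi0 : i = 0 := by
      by_contra h0
      refine h2 ⟨i - 1, by omega, fun j hj hlt => ?_⟩
      have h' : i + j < k+1+m+1 := by omega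
      have := hrun j hj h'
      rw [cons_mk_pos _ _ _ _ (by omega)] at this
      rw [fcongr (Fin.append x y) hlt (show i + j - 1 < k+1+m by omega) (by omega)]
      exact this
    subst hi0
    have hx : ∀ j (h : j < k + 1), j < k → x ⟨j, h⟩ = true := by
      intro j h hj
      have h' : 0 + (j+1) < k+1+m+1 := by omega
      have := hrun (j+1) (by omega) h'
      rw [cons_mk_pos _ _ _ _ (by omega)] at this
      rw [append_mk_left x y _ _ (by omega)] at this
      rw [fcongr x _ h (by omega)] at this
      exact this
    have hb : b = true := by
      have h' : 0 + 0 < k+1+m+1 := by omega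
      have := hrun 0 (by omega) h'
      rw [fcongr (Fin.cons b (Fin.append x y) : Fin (k+1+m+1) → Bool) h'
        (show (0:ℕ) < k+1+m+1 by omega) (by omega)] at this
      rw [cons_mk_zero] at this
      exact this
    have hxk : ∀ h : k < k + 1, x ⟨k, h⟩ = false := by
      intro h
      by_contra hxx
      have hxx' : x ⟨k, h⟩ = true := by
        cases hh : x ⟨k, h⟩
        · exact absurd hh hxx
        · rfl
      refine h2 ⟨0, by omega, fun j hj hlt => ?_⟩
      rw [append_mk_left x y _ _ (by omega)]
      rcases Nat.lt_or_ge j k with hc | hc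
      · exact hx _ _ (by omega)
      · rw [fcongr x _ h (by omega)]
        exact hxx'
    refine ⟨hb, funext fun i => ?_, fun hy => ?_⟩
    · rcases Nat.lt_or_ge i.val k with hc | hc
      · have := hx i.val i.isLt hc
        rw [Fin.eta] at this
        simp [this, hc]
      · have hik : i.val = k := by omega
        have h1 : i = (⟨k, by omega⟩ : Fin (k+1)) := Fin.ext (show i.val = k by omega)
        rw [h1, hxk]
        simp
    · obtain ⟨i, hi', hrun'⟩ := hy
      refine h2 ⟨k+1+i, by omega, fun j hj hlt => ?_⟩
      rw [append_mk_right x y _ _ (by omega)]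
      have h' : i + j < m := by omega
      have := hrun' j hj h'
      rw [fcongr y _ h' (by omega)]
      exact this
  · rintro ⟨hb, hx, hy⟩
    subst hb hx
    constructor
    · refine ⟨0, by omega, fun j hj hlt => ?_⟩
      rcases Nat.eq_zero_or_pos j with h0 | h0
      · subst h0
        rw [fcongr (Fin.cons true (Fin.append (fun i => decide (i.val < k)) y) :
            Fin (k+1+m+1) → Bool) hlt (show (0:ℕ) < k+1+m+1 by omega) (by omega), cons_mk_zero]
      · rw [cons_mk_pos _ _ _ _ (by omega)]
        rw [append_mk_left _ y _ (by omega) (by omega)]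
        simp only [decide_eq_true_eq]
        omega
    · rintro ⟨i, hi, hrun⟩
      rcases Nat.lt_or_ge i (k+1) with hc | hc
      · have h' : i + (k - i) < k+1+m := by omega
        have := hrun (k - i) (by omega) h'
        rw [append_mk_left _ y _ _ (by omega)] at this
        have hkk : i + (k - i) < k := by simpa using this
        omega
      · refine hy ⟨i - (k+1), by omega, fun j hj hlt => ?_⟩
        have h' : i + j < k+1+m := by omega
        have := hrun j hj h'
        rw [append_mk_right _ y _ _ (by omega)] at this
        rw [fcongr y _ hlt (by omega)] at this
        exact this

lemma not_hasRun_of_lt {r n : ℕ} (h : n < r) (s : Fin n → Bool) : ¬ hasRun r s := by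
  rintro ⟨i, hi, -⟩; omega

lemma Zf_of_lt (p : ℝ) {r n : ℕ} (h : n < r) : Zf p r n = 1 := by
  unfold Zf
  rw [Finset.sum_congr rfl (fun s _ => if_neg (not_hasRun_of_lt h s))]
  exact sum_wgt p n

lemma hasRun_self {r : ℕ} (s : Fin r → Bool) :
    hasRun r s ↔ s = fun _ => true := by
  constructor
  · rintro ⟨i, hi, hrun⟩
    have hi0 : i = 0 := by omega
    subst hi0
    funext j
    have h' : 0 + j.val < r := by omega
    have := hrun j.val j.isLt h'
    rw [fcongr s h' j.isLt (by omega), Fin.eta] at this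
    exact this
  · rintro rfl
    exact ⟨0, by omega, fun j hj h => rfl⟩

lemma Zf_self (p : ℝ) {r : ℕ} : Zf p r r = 1 - p ^ r := by
  classical
  unfold Zf
  have step : ∀ s : Fin r → Bool, (if hasRun r s then (0:ℝ) else wgt p s)
      = wgt p s - (if s = (fun _ => true) then wgt p s else 0) := by
    intro s
    by_cases h : hasRun r s
    · rw [if_pos h, if_pos ((hasRun_self s).1 h)]; ring
    · rw [if_neg h, if_neg (fun he => h ((hasRun_self s).2 he))]; ring
  rw [Finset.sum_congr rfl (fun s _ => step s), Finset.sum_sub_distrib, sum_wgt,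
    Finset.sum_ite_eq' Finset.univ (fun _ => true) (fun s => wgt p s)]
  simp [wgt]

lemma wgt_x0 (p : ℝ) (k : ℕ) :
    wgt p (fun i : Fin (k+1) => decide (i.val < k)) = p ^ k * (1 - p) := by
  unfold wgt
  rw [Fin.prod_univ_castSucc]
  have h1 : ∀ i : Fin k, (if (decide ((Fin.castSucc i).val < k)) = true then p else 1-p) = p := by
    intro i
    simp [Fin.castSucc, i.isLt]
  have h2 : (if (decide ((Fin.last k).val < k)) = true then p else 1-p) = 1 - p := by
    simp [Fin.last]
  rw [Finset.prod_congr rfl (fun i _ => h1 i), h2, Finset.prod_const]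
  simp

lemma Zf_rec (p : ℝ) (k m : ℕ) :
    Zf p (k+1) (k+1+m) = Zf p (k+1) (k+1+m+1) + (1-p) * p^(k+1) * Zf p (k+1) m := by
  classical
  set r := k + 1 with hrdef
  have h1 : Zf p r (r+m) = ∑ b : Bool, ∑ s : Fin (r+m) → Bool,
      (if hasRun r s then 0 else wgt p (Fin.cons b s)) := by
    have inner : ∀ c : ℝ, ∑ s : Fin (r+m) → Bool, (if hasRun r s then (0:ℝ) else c * wgt p s)
        = c * Zf p r (r+m) := by
      intro c
      unfold Zf
      rw [Finset.mul_sum]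
      refine Finset.sum_congr rfl (fun s _ => ?_)
      by_cases h : hasRun r s <;> simp [h]
    calc Zf p r (r+m) = (p + (1-p)) * Zf p r (r+m) := by ring
    _ = ∑ b : Bool, (if b then p else 1-p) * Zf p r (r+m) := by
        rw [Fintype.sum_bool]; simp; ring
    _ = _ := by
        refine Finset.sum_congr rfl (fun b _ => ?_)
        rw [← inner (if b then p else 1-p)]
        refine Finset.sum_congr rfl (fun s _ => ?_)
        rw [wgt_cons]
  have h2 : ∀ (b : Bool) (s : Fin (r+m) → Bool),
      (if hasRun r s then (0:ℝ) else wgt p (Fin.cons b s))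
      = (if hasRun r (Fin.cons b s) then 0 else wgt p (Fin.cons b s))
        + (if hasRun r (Fin.cons b s) ∧ ¬ hasRun r s then wgt p (Fin.cons b s) else 0) := by
    intro b s
    by_cases h : hasRun r s
    · rw [if_pos h, if_pos (hasRun_cons b h), if_neg (by tauto)]; ring
    · by_cases h' : hasRun r (Fin.cons b s)
      · rw [if_neg h, if_pos h', if_pos ⟨h', h⟩]; ring
      · rw [if_neg h, if_neg h', if_neg (by tauto)]; ring
  rw [h1]
  have h3 : ∑ b : Bool, ∑ s : Fin (r+m) → Bool,
      (if hasRun r s then (0:ℝ) else wgt p (Fin.cons b s))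
      = Zf p r (r+m+1) + ∑ b : Bool, ∑ s : Fin (r+m) → Bool,
          (if hasRun r (Fin.cons b s) ∧ ¬ hasRun r s then wgt p (Fin.cons b s) else 0) := by
    rw [Finset.sum_congr rfl (fun b _ => Finset.sum_congr rfl (fun s _ => h2 b s))]
    rw [Finset.sum_congr rfl (fun b _ => Finset.sum_add_distrib), Finset.sum_add_distrib]
    congr 1
    exact (sum_cons (fun t => if hasRun r t then 0 else wgt p t)).symm
  rw [h3]
  congr 1
  have h4 : ∀ b : Bool, ∑ s : Fin (r+m) → Bool,
      (if hasRun r (Fin.cons b s) ∧ ¬ hasRun r s then wgt p (Fin.cons b s) else 0)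
      = ∑ x : Fin r → Bool, ∑ y : Fin m → Bool,
          (if b = true ∧ x = (fun i => decide (i.val < k)) ∧ ¬ hasRun r y
            then wgt p (Fin.cons b (Fin.append x y)) else 0) := by
    intro b
    rw [sum_append (fun s => if hasRun r (Fin.cons b s) ∧ ¬ hasRun r s then wgt p (Fin.cons b s) else 0)]
    exact Finset.sum_congr rfl fun x _ => Finset.sum_congr rfl fun y _ =>
      if_congr (key_iff b x y) rfl rfl
  have h5 : ∀ (b : Bool) (x : Fin r → Bool), ∑ y : Fin m → Bool,
      (if b = true ∧ x = (fun i => decide (i.val < k)) ∧ ¬ hasRun r y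
        then wgt p (Fin.cons b (Fin.append x y)) else 0)
      = (if b = true ∧ x = (fun i => decide (i.val < k))
          then ∑ y : Fin m → Bool, (if ¬ hasRun r y then wgt p (Fin.cons b (Fin.append x y)) else 0)
          else 0) := by
    intro b x
    by_cases hbx : b = true ∧ x = (fun i => decide (i.val < k))
    · rw [if_pos hbx]
      exact Finset.sum_congr rfl fun y _ => if_congr (by tauto) rfl rfl
    · rw [if_neg hbx]
      exact Finset.sum_eq_zero fun y _ => if_neg (by tauto)
  have h6 : ∀ b : Bool, ∑ x : Fin r → Bool,
      (if b = true ∧ x = (fun i => decide (i.val < k))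
        then ∑ y : Fin m → Bool, (if ¬ hasRun r y then wgt p (Fin.cons b (Fin.append x y)) else 0)
        else 0)
      = (if b = true then ∑ y : Fin m → Bool,
          (if ¬ hasRun r y then wgt p (Fin.cons b (Fin.append (fun i : Fin r => decide (i.val < k)) y)) else 0) else 0) := by
    intro b
    by_cases hb : b = true
    · rw [if_pos hb]
      rw [Finset.sum_congr rfl (fun x _ => if_congr
        (by tauto : (b = true ∧ x = (fun i : Fin r => decide (i.val < k)))
          ↔ (x = (fun i : Fin r => decide (i.val < k)))) rfl rfl)]
      rw [Finset.sum_ite_eq' Finset.univ (fun i : Fin r => decide (i.val < k))]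
      simp [hb]
    · rw [if_neg hb]
      exact Finset.sum_eq_zero fun x _ => if_neg (by tauto)
  rw [Finset.sum_congr rfl (fun b _ => h4 b),
    Finset.sum_congr rfl (fun b _ => Finset.sum_congr rfl (fun x _ => h5 b x)),
    Finset.sum_congr rfl (fun b _ => h6 b), Fintype.sum_bool]
  rw [if_pos rfl, if_neg (by simp)]
  have h7 : ∀ y : Fin m → Bool,
      wgt p (Fin.cons true (Fin.append (fun i : Fin r => decide (i.val < k)) y))
      = (1-p) * p^r * wgt p y := by
    intro y
    rw [wgt_cons, wgt_append, wgt_x0]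
    have : p ^ r = p ^ k * p := by rw [hrdef, pow_succ]
    rw [this]; simp; ring
  rw [Finset.sum_congr rfl (fun y _ => by rw [h7 y])]
  have h8 : ∑ y : Fin m → Bool, (if ¬ hasRun r y then (1-p) * p^r * wgt p y else 0)
      = (1-p) * p^r * Zf p r m := by
    unfold Zf
    rw [Finset.mul_sum]
    refine Finset.sum_congr rfl (fun y _ => ?_)
    by_cases h : hasRun r y <;> simp [h]
  rw [h8, add_zero]

/-! ### betaCoeff lemmas -/

lemma beta_extend (a : ℝ) (r n M : ℕ) (hM : n / (r + 1) + 1 ≤ M) :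
    betaCoeff a r n = ∑ l ∈ Finset.range M,
      (-1 : ℝ) ^ l * (Nat.choose (n - l * r) l : ℝ) * a ^ l := by
  unfold betaCoeff
  refine Finset.sum_subset (Finset.range_subset_range.2 hM) (fun l hl hl2 => ?_)
  simp only [Finset.mem_range, not_lt] at hl hl2
  have hdiv : n / (r+1) < l := by omega
  have h1 : n < l * (r+1) := (Nat.div_lt_iff_lt_mul (by omega)).1 hdiv
  have h1' : n < l * r + l := by
    calc n < l * (r+1) := h1
    _ = l * r + l := by ring
  have hl1 : 1 ≤ l := Nat.le_trans (Nat.succ_le_succ (Nat.zero_le _)) hl2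
  have h3 : n - l * r < l := by
    rcases le_or_gt (l*r) n with hc | hc
    · exact (Nat.sub_lt_iff_lt_add hc).2 (by omega)
    · have h0 : n - l * r = 0 := by omega
      rw [h0]; omega
  rw [Nat.choose_eq_zero_of_lt h3]
  simp

lemma beta_of_le (a : ℝ) (r n : ℕ) (h : n ≤ r) : betaCoeff a r n = 1 := by
  unfold betaCoeff
  rw [Nat.div_eq_of_lt (by omega)]
  simp

lemma pascal_nat (r m j : ℕ) :
    Nat.choose (m+r+1-(j+1)*r) (j+1)
      = Nat.choose (m+r-(j+1)*r) (j+1) + Nat.choose (m-j*r) j := by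
  have hmul : (j+1)*r = j*r + r := by ring
  rcases le_or_gt (j*r) m with h | h
  · have h1 : m+r+1-(j+1)*r = (m - j*r)+1 := by omega
    have h2 : m+r-(j+1)*r = m - j*r := by omega
    rw [h1, h2, Nat.choose_succ_succ, add_comm]
  · have hj : j ≠ 0 := by rintro rfl; simp at h
    obtain ⟨j', rfl⟩ : ∃ j', j = j' + 1 := ⟨j - 1, by omega⟩
    have h1 : m+r+1-(j'+1+1)*r = 0 := by
      have : (j'+1+1)*r = (j'+1)*r + r := by ring
      omega
    have h2 : m+r-(j'+1+1)*r = 0 := by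
      have : (j'+1+1)*r = (j'+1)*r + r := by ring
      omega
    have h3 : m-(j'+1)*r = 0 := by omega
    rw [h1, h2, h3, Nat.choose_zero_succ, Nat.choose_zero_succ]

lemma beta_rec (a : ℝ) (r m : ℕ) :
    betaCoeff a r (m+r+1) = betaCoeff a r (m+r) - a * betaCoeff a r m := by
  set K := m / (r+1) with hK
  have hdiv : (m+r+1) / (r+1) = K + 1 := by
    rw [show m+r+1 = m+(r+1) from by ring, Nat.add_div_right _ (by omega)]
  have b1 : betaCoeff a r (m+r+1) = ∑ l ∈ Finset.range (K+2),
      (-1 : ℝ) ^ l * (Nat.choose (m+r+1 - l * r) l : ℝ) * a ^ l := by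
    unfold betaCoeff; rw [hdiv]
  have b2 : betaCoeff a r (m+r) = ∑ l ∈ Finset.range (K+2),
      (-1 : ℝ) ^ l * (Nat.choose (m+r - l * r) l : ℝ) * a ^ l := by
    refine beta_extend a r (m+r) (K+2) ?_
    have : (m+r)/(r+1) ≤ (m+r+1)/(r+1) := Nat.div_le_div_right (by omega)
    omega
  rw [b1, b2, Finset.sum_range_succ' _ (K+1), Finset.sum_range_succ' _ (K+1)]
  unfold betaCoeff
  rw [← hK, Finset.mul_sum]
  have hterm : ∀ j, (-1:ℝ)^(j+1) * (Nat.choose (m+r+1 - (j+1)*r) (j+1) : ℝ) * a^(j+1)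
      = (-1:ℝ)^(j+1) * (Nat.choose (m+r - (j+1)*r) (j+1) : ℝ) * a^(j+1)
        - a * ((-1:ℝ)^j * (Nat.choose (m - j*r) j : ℝ) * a^j) := by
    intro j
    rw [pascal_nat r m j]
    push_cast
    ring
  rw [Finset.sum_congr rfl (fun j _ => hterm j)]
  simp only [Finset.sum_sub_distrib]
  simp [Nat.choose_zero_right]
  ring

/-! ### Main theorem -/

lemma noRunProb_eq_Zf (p : ℝ) (r n : ℕ) : noRunProb p r n = Zf p r n := by
  classical
  unfold noRunProb Zf
  rw [Finset.sum_filter]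
  refine Finset.sum_congr rfl (fun s _ => ?_)
  have hw : wgt p s = p ^ (Finset.univ.filter (fun i : Fin n => s i = true)).card *
      (1 - p) ^ (Finset.univ.filter (fun i : Fin n => s i = false)).card := by
    unfold wgt
    rw [Finset.prod_ite (fun _ => p) (fun _ => 1-p), Finset.prod_const, Finset.prod_const]
    have hfilt : Finset.univ.filter (fun i : Fin n => ¬ s i = true)
        = Finset.univ.filter (fun i : Fin n => s i = false) := by
      ext i; simp
    rw [hfilt]
  by_cases h : hasRun r s
  · rw [if_neg (by tauto), if_pos h]
  · rw [if_pos h, if_neg (by tauto), hw]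

lemma Zf_eq_beta (p : ℝ) (k : ℕ) : ∀ n, k + 1 ≤ n →
    Zf p (k+1) n = betaCoeff ((1-p) * p^(k+1)) (k+1) n
      - p^(k+1) * betaCoeff ((1-p) * p^(k+1)) (k+1) (n - (k+1)) := by
  set r := k + 1 with hrdef
  set a := (1-p) * p^r with ha
  intro n
  induction n using Nat.strong_induction_on with
  | _ n IH =>
    intro hn
    rcases eq_or_lt_of_le hn with heq | hlt
    · subst heq
      rw [Zf_self, Nat.sub_self, beta_of_le a r r le_rfl, beta_of_le a r 0 (by omega)]
      ring
    · obtain ⟨m, rfl⟩ : ∃ m, n = r + m + 1 := ⟨n - r - 1, by omega⟩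
      have hrec := Zf_rec p k m
      rw [← hrdef] at hrec
      have hZn : Zf p r (r+m+1) = Zf p r (r+m) - (1-p)*p^r * Zf p r m := by
        rw [hrec]; ring
      have hIH1 : Zf p r (r+m) = betaCoeff a r (r+m) - p^r * betaCoeff a r m := by
        have := IH (r+m) (by omega) (by omega)
        rwa [show r+m-r = m from by omega] at this
      have hbr : betaCoeff a r (r+m+1) = betaCoeff a r (r+m) - a * betaCoeff a r m := by
        have := beta_rec a r m
        rwa [show m+r+1 = r+m+1 from by ring, show m+r = r+m from by ring] at this
      rw [show r+m+1-r = m+1 from by omega]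
      rcases lt_or_ge m r with hm | hm
      · rw [hZn, hIH1, hbr, Zf_of_lt p hm, beta_of_le a r m (by omega),
          beta_of_le a r (m+1) (by omega)]
        ring
      · have hIH2 : Zf p r m = betaCoeff a r m - p^r * betaCoeff a r (m-r) :=
          IH m (by omega) hm
        have hbm : betaCoeff a r (m+1) = betaCoeff a r m - a * betaCoeff a r (m-r) := by
          have := beta_rec a r (m-r)
          rwa [show m-r+r+1 = m+1 from by omega, show m-r+r = m from by omega] at this
        rw [hZn, hIH1, hIH2, hbr, hbm]
        ring

theorem no_run_prob_eq_beta (p : ℝ) (hp : 0 < p) (hp1 : p < 1) (q : ℝ) (hq : q = 1 - p)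
    (r : ℕ) (hr : 1 ≤ r) (n : ℕ) (hn : r ≤ n) :
    noRunProb p r n = betaCoeff (q * p ^ r) r n - p ^ r * betaCoeff (q * p ^ r) r (n - r) := by
  subst hq
  obtain ⟨k, rfl⟩ : ∃ k, r = k + 1 := ⟨r - 1, by omega⟩
  rw [noRunProb_eq_Zf]
  exact Zf_eq_beta p k n hn
end

section
/- Let R be a commutative ring, let a ∈ R, and let r ≥ 1. The formal power series 1 − X + a·X^{r+1} in R⟦X⟧ is invertible (its constant coefficient is 1), and for every n ≥ 0 the coefficient of X^n in its inverse (1 − X + a·X^{r+1})⁻¹ equals Σ_{l=0}^{⌊n/(r+1)⌋} (−1)^l · C(n − l·r, l) · a^l. -/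
/-!
Writing `g n` for the claimed coefficient, it suffices to check that
`(1 - X + a X^(r+1)) * ∑ g n X^n = 1`, i.e. that `g 0 = 1`, `g n = 1` for `n ≤ r`, and
`g n = g (n - 1) - a g (n - r - 1)` for `n ≥ r + 1`. The recurrence is Pascal's rule
`C(n - (l+1) r, l+1) = C(n - 1 - (l+1) r, l+1) + C(n - (r+1) - l r, l)` applied termwise.
-/

open PowerSeries Finset

namespace Nat

theorem choose_sub_mul_eq_zero {n l r : ℕ} (h : n < l * (r + 1)) : (n - l * r).choose l = 0 := by
  have hl : l ≠ 0 := by rintro rfl; simp at h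
  exact Nat.choose_eq_zero_of_lt (by rw [mul_add_one] at h; omega)

theorem choose_sub_mul_succ {n l r : ℕ} (hn : r + 1 ≤ n) :
    (n - (l + 1) * r).choose (l + 1) =
      (n - 1 - (l + 1) * r).choose (l + 1) + (n - (r + 1) - l * r).choose l := by
  rw [add_one_mul] at *
  by_cases hlt : l * r + r < n
  · rw [show n - (l * r + r) = n - 1 - (l * r + r) + 1 by omega,
      show n - (r + 1) - l * r = n - 1 - (l * r + r) by omega, Nat.choose_succ_succ, add_comm]
  · have hl : 0 < l := Nat.pos_of_ne_zero (by rintro rfl; omega)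
    rw [show n - (l * r + r) = 0 by omega, show n - 1 - (l * r + r) = 0 by omega,
      show n - (r + 1) - l * r = 0 by omega, Nat.choose_eq_zero_of_lt hl]
    simp

end Nat

section

variable {R : Type*} [CommRing R] (a : R) (r : ℕ)

def trinomialInvTerm (n l : ℕ) : R :=
  (-1 : R) ^ l * (Nat.choose (n - l * r) l : R) * a ^ l

def trinomialInvCoeff (n : ℕ) : R :=
  ∑ l ∈ range (n / (r + 1) + 1), trinomialInvTerm a r n l

theorem trinomialInvCoeff_eq_sum_range {n N : ℕ} (hN : n / (r + 1) < N) :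
    trinomialInvCoeff a r n = ∑ l ∈ range N, trinomialInvTerm a r n l := by
  refine sum_subset (range_subset_range.mpr hN) fun l _ hl => ?_
  have hlt : n < l * (r + 1) := (Nat.div_lt_iff_lt_mul (by omega)).mp (by simpa using hl)
  simp [trinomialInvTerm, Nat.choose_sub_mul_eq_zero hlt]

theorem trinomialInvCoeff_of_lt {n : ℕ} (hn : n < r + 1) : trinomialInvCoeff a r n = 1 := by
  simp [trinomialInvCoeff, trinomialInvTerm, Nat.div_eq_of_lt hn]

theorem trinomialInvCoeff_of_le {n : ℕ} (hn : r + 1 ≤ n) :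
    trinomialInvCoeff a r n =
      trinomialInvCoeff a r (n - 1) - a * trinomialInvCoeff a r (n - (r + 1)) := by
  have hdiv : ∀ m, m / (r + 1) ≤ m := fun m => Nat.div_le_self m (r + 1)
  rw [trinomialInvCoeff_eq_sum_range a r (N := n + 1) (by linarith [hdiv n]),
    trinomialInvCoeff_eq_sum_range a r (N := n + 1) (by have := hdiv (n - 1); omega),
    trinomialInvCoeff_eq_sum_range a r (N := n) (by have := hdiv (n - (r + 1)); omega),
    sum_range_succ', sum_range_succ', mul_sum, add_sub_right_comm, ← sum_sub_distrib]
  congr 1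
  · refine sum_congr rfl fun l _ => ?_
    simp only [trinomialInvTerm, Nat.choose_sub_mul_succ (l := l) hn]
    push_cast
    ring
  · simp [trinomialInvTerm]

theorem one_sub_X_add_C_mul_X_pow_mul_mk_trinomialInvCoeff :
    ((1 : R⟦X⟧) - X + C a * X ^ (r + 1)) * PowerSeries.mk (trinomialInvCoeff a r) = 1 := by
  ext n
  rcases n with _ | n
  · simp [trinomialInvCoeff, trinomialInvTerm]
  · rw [add_mul, sub_mul, one_mul, mul_assoc, map_add, map_sub, coeff_C_mul, coeff_succ_X_mul,
      coeff_X_pow_mul', coeff_one, if_neg n.succ_ne_zero]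
    simp only [coeff_mk]
    split_ifs with hn
    · rw [trinomialInvCoeff_of_le a r hn, Nat.add_sub_cancel]
      ring
    · rw [trinomialInvCoeff_of_lt a r (by omega), trinomialInvCoeff_of_lt a r (by omega)]
      ring

end

theorem coeff_inverse_one_sub_X_add_aXr_general {R : Type*} [CommRing R] (a : R) (r : ℕ) :
    IsUnit ((1 : R⟦X⟧) - X + C a * X ^ (r + 1)) ∧
      ∀ n : ℕ,
        coeff n (Ring.inverse ((1 : R⟦X⟧) - X + C a * X ^ (r + 1))) =
          ∑ l ∈ Finset.range (n / (r + 1) + 1),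
            (-1 : R) ^ l * (Nat.choose (n - l * r) l : R) * a ^ l := by
  have hmul := one_sub_X_add_C_mul_X_pow_mul_mk_trinomialInvCoeff a r
  have hunit := IsUnit.of_mul_eq_one _ hmul
  have hinv : Ring.inverse ((1 : R⟦X⟧) - X + C a * X ^ (r + 1)) =
      PowerSeries.mk (trinomialInvCoeff a r) := by
    simpa using (Ring.inverse_mul_eq_iff_eq_mul _ 1 _ hunit).mpr hmul.symm
  exact ⟨hunit, fun n => by rw [hinv, coeff_mk]; rfl⟩

theorem coeff_inverse_one_sub_X_add_aXr {R : Type*} [CommRing R] (a : R) (r : ℕ) (hr : 1 ≤ r) :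
    IsUnit ((1 : R⟦X⟧) - X + C a * X ^ (r + 1)) ∧
      ∀ n : ℕ,
        coeff n (Ring.inverse ((1 : R⟦X⟧) - X + C a * X ^ (r + 1))) =
          ∑ l ∈ Finset.range (n / (r + 1) + 1),
            (-1 : R) ^ l * (Nat.choose (n - l * r) l : R) * a ^ l :=
  coeff_inverse_one_sub_X_add_aXr_general a r
end

section
/- Let 0 < p < 1, q = 1 − p, and r ≥ 1. For n ≥ 0 define z_n as the probability that in n independent Bernoulli trials with success probability p there is no run of r consecutive successes; equivalently z_n = Σ_{s ∈ {0,1}^n, s has no r consecutive 1's} p^{#{i : s_i = 1}} q^{#{i : s_i = 0}}. Then in the ring ℝ⟦X⟧ of formal power series over the reals, the generating function G(X) = Σ_{n≥0} z_n·X^n satisfies G(X)·(1 − X + q·p^r·X^{r+1}) = 1 − p^r·X^r; that is, G(X) = (1 − p^r X^r)/(1 − X + q p^r X^{r+1}). -/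
open PowerSeries

/-!
Write `f m n` for `noRunProbAfter p r m n`, the probability that `n` trials contain no run of
`r` successes when they are preceded by `m` successes. Conditioning on the first trial gives
`f m (n + 1) = p * f (m + 1) n + q * f 0 n` for `m < r`, with `f r = 0` and `f m 0 = 1`.
For the generating functions `F m` this reads `F m = 1 + X * (p * F (m + 1) + q * F 0)`, and
unrolling from `F r = 0` gives `F 0 = (1 + p X + ⋯ + (p X) ^ (r - 1)) * (1 + q X * F 0)`.
Multiplying by `1 - p X` and using `p + q = 1` yields the identity.
-/

namespace List

theorem IsInfix.of_append_cons_of_not_mem {α : Type*} {l xs ys : List α} {c : α}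
    (h : l <:+: xs ++ c :: ys) (hc : c ∉ l) : l <:+: xs ∨ l <:+: ys := by
  rcases infix_append_iff.mp h with h | h | ⟨l₁, l₂, rfl, h₁, h₂⟩
  · exact .inl h
  · rcases infix_cons_iff.mp h with h | h
    · rcases prefix_cons_iff.mp h with rfl | ⟨t, rfl, -⟩
      · exact .inl nil_infix
      · exact absurd mem_cons_self hc
    · exact .inr h
  · rcases prefix_cons_iff.mp h₂ with rfl | ⟨t, rfl, -⟩
    · exact .inl (by simpa using h₁.isInfix)
    · exact absurd (mem_append_right _ mem_cons_self) hc

theorem not_replicate_infix_replicate {α : Type*} {a : α} {m r : ℕ} (hm : m < r) :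
    ¬ replicate r a <:+: replicate m a := fun h =>
  absurd h.length_le (by simpa using hm)

theorem replicate_infix_replicate_append_cons_iff {α : Type*} {a c : α} (hc : c ≠ a)
    {m r : ℕ} (hm : m < r) (l : List α) :
    replicate r a <:+: replicate m a ++ c :: l ↔ replicate r a <:+: l := by
  refine ⟨fun h => ?_, fun h => infix_append_of_infix_right (infix_cons h)⟩
  exact (h.of_append_cons_of_not_mem fun hmem => hc (eq_of_mem_replicate hmem)).resolve_left
    (not_replicate_infix_replicate hm)

end List

theorem hasRun_iff_replicate_infix {r n : ℕ} (s : Fin n → Bool) :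
    hasRun r s ↔ List.replicate r true <:+: List.ofFn s := by
  rw [List.infix_iff_getElem?]
  simp only [hasRun, List.length_replicate, List.length_ofFn, List.getElem_replicate]
  refine exists_congr fun i => ?_
  rw [add_comm r i]
  refine and_congr_right fun hi => forall₂_congr fun j hj => ?_
  rw [List.getElem?_ofFn, dif_pos (by omega), Option.some_inj]
  simp only [add_comm j i, forall_prop_of_true (show i + j < n by omega)]

theorem Fintype.sum_fin_succ_pi {M : Type*} [AddCommMonoid M] {α : Type*} [Fintype α] {n : ℕ}
    (g : (Fin (n + 1) → α) → M) : ∑ s, g s = ∑ a, ∑ t : Fin n → α, g (Fin.cons a t) := by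
  rw [← (Fin.consEquiv fun _ => α).sum_comp, Fintype.sum_prod_type]
  rfl

section

variable {R : Type*} [CommRing R]

def trialWeight (p : R) {n : ℕ} (s : Fin n → Bool) : R :=
  ∏ i, if s i then p else 1 - p

theorem trialWeight_cons (p : R) {n : ℕ} (b : Bool) (s : Fin n → Bool) :
    trialWeight p (Fin.cons b s : Fin (n + 1) → Bool) =
      (if b then p else 1 - p) * trialWeight p s := by
  simp only [trialWeight, Fin.prod_univ_succ, Fin.cons_zero, Fin.cons_succ]

theorem trialWeight_eq_pow_mul_pow (p : R) {n : ℕ} (s : Fin n → Bool) :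
    trialWeight p s = p ^ (Finset.univ.filter (fun i => s i = true)).card *
      (1 - p) ^ (Finset.univ.filter (fun i => s i = false)).card := by
  simp [trialWeight, Finset.prod_ite]

def noRunProbAfter (p : R) (r m n : ℕ) : R :=
  ∑ s : Fin n → Bool,
    if List.replicate r true <:+: List.replicate m true ++ List.ofFn s then 0 else trialWeight p s

theorem noRunProbAfter_self (p : R) (r n : ℕ) : noRunProbAfter p r r n = 0 :=
  Finset.sum_eq_zero fun _ _ => if_pos List.infix_append_left

theorem noRunProbAfter_zero_right (p : R) {r m : ℕ} (hm : m < r) :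
    noRunProbAfter p r m 0 = 1 := by
  simp [noRunProbAfter, trialWeight, List.not_replicate_infix_replicate hm]

theorem noRunProbAfter_succ (p : R) {r m : ℕ} (hm : m < r) (n : ℕ) :
    noRunProbAfter p r m (n + 1)
      = p * noRunProbAfter p r (m + 1) n + (1 - p) * noRunProbAfter p r 0 n := by
  simp only [noRunProbAfter, Fintype.sum_fin_succ_pi, Fintype.sum_bool, List.ofFn_succ,
    Fin.cons_zero, Fin.cons_succ, trialWeight_cons, Finset.mul_sum, mul_ite, mul_zero]
  congr 1
  · simp [List.replicate_succ', List.append_assoc]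
  · simp [List.replicate_infix_replicate_append_cons_iff Bool.false_ne_true hm]

theorem noRunProb_eq_noRunProbAfter_zero (p : ℝ) (r n : ℕ) :
    noRunProb p r n = noRunProbAfter p r 0 n := by
  classical
  rw [noRunProb, Finset.sum_filter]
  refine Finset.sum_congr rfl fun s _ => ?_
  rw [hasRun_iff_replicate_infix, List.replicate_zero, List.nil_append, ite_not,
    trialWeight_eq_pow_mul_pow]
  congr

theorem mk_noRunProbAfter_of_lt (p : R) {r m : ℕ} (hm : m < r) :
    mk (noRunProbAfter p r m) = 1 + X * (C p * mk (noRunProbAfter p r (m + 1)) +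
      C (1 - p) * mk (noRunProbAfter p r 0)) := by
  ext (_ | n)
  · simp [noRunProbAfter_zero_right p hm]
  · simp only [map_add, coeff_one, coeff_succ_X_mul, coeff_C_mul, coeff_mk,
      noRunProbAfter_succ p hm, Nat.add_one_ne_zero, if_false, zero_add]

theorem mk_noRunProbAfter_sub (p : R) {r d : ℕ} (hd : d ≤ r) :
    mk (noRunProbAfter p r (r - d)) =
      (∑ k ∈ Finset.range d, (C p * X) ^ k) *
        (1 + C (1 - p) * X * mk (noRunProbAfter p r 0)) := by
  induction d with
  | zero => ext; simp [noRunProbAfter_self]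
  | succ d ih =>
    rw [mk_noRunProbAfter_of_lt p (by omega), show r - (d + 1) + 1 = r - d by omega,
      ih (by omega), Finset.sum_range_succ']
    simp only [pow_succ, ← Finset.sum_mul]
    ring

theorem mk_noRunProbAfter_zero_mul (p : R) (r : ℕ) :
    mk (noRunProbAfter p r 0) * (1 - X + C ((1 - p) * p ^ r) * X ^ (r + 1)) =
      1 - C (p ^ r) * X ^ r := by
  have hF := mk_noRunProbAfter_sub p (le_refl r)
  rw [Nat.sub_self] at hF
  have hA := mul_neg_geom_sum (C p * X) r
  simp only [map_mul, map_pow, map_sub, map_one] at hF ⊢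
  linear_combination (1 - C p * X) * hF + (1 + (1 - C p) * X * mk (noRunProbAfter p r 0)) * hA

end

theorem generating_function_noRunProb_general (p : ℝ) (q : ℝ) (hq : q = 1 - p) (r : ℕ) :
    (PowerSeries.mk fun n => noRunProb p r n) *
        ((1 : ℝ⟦X⟧) - X + C (q * p ^ r) * X ^ (r + 1)) =
      1 - C (p ^ r) * X ^ r := by
  subst hq
  simp only [noRunProb_eq_noRunProbAfter_zero]
  exact mk_noRunProbAfter_zero_mul p r

theorem generating_function_noRunProb (p : ℝ) (hp : 0 < p) (hp1 : p < 1)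
    (q : ℝ) (hq : q = 1 - p) (r : ℕ) (hr : 1 ≤ r) :
    (PowerSeries.mk fun n => noRunProb p r n) *
        ((1 : ℝ⟦X⟧) - X + C (q * p ^ r) * X ^ (r + 1)) =
      1 - C (p ^ r) * X ^ r :=
  generating_function_noRunProb_general p q hq r
end
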